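/- arXiv:2004.05316 — 4 statements merged into one kernel-verified Lean document; each statement's English description precedes it below -/
import Mathlib

section
/- Let w^(1), ..., w^(n) be i.i.d. random vectors on a probability space taking values in {-1,1}^m, let O* := E[w^(1) (w^(1))^T] be the population second-moment matrix, and let Ô := (1/n) Σ_{i=1}^n w^(i) (w^(i))^T be the empirical second-moment matrix. Then the expected spectral-norm deviation satisfies E[‖Ô − O*‖] ≤ m² √(32π/n). -/
open MeasureTheory ProbabilityTheory Real Finset
open scoped Matrix.Norms.L2Operator

/-!
Since the spectral norm of a matrix is at most the sum of the absolute values of its entries, it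
suffices to bound each of the m² entries of Ô − O* in mean by 1/√n. The (a, b) entry is the
deviation of the sample mean of the n i.i.d. variables w⁽ⁱ⁾_a w⁽ⁱ⁾_b ∈ [-1, 1] from their common
mean. By Cauchy–Schwarz its expected absolute value is at most the standard deviation of the sample
mean, and pairwise independence together with Popoviciu's inequality bounds the variance by 1/n.
Finally 1 ≤ √(32π).
-/

namespace Matrix

variable {𝕜 : Type*} [RCLike 𝕜] {m n : Type*} [Fintype m] [Fintype n] [DecidableEq n]

theorem l2_opNorm_le_sum_norm (A : Matrix m n 𝕜) : ‖A‖ ≤ ∑ i, ∑ j, ‖A i j‖ := by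
  rw [l2_opNorm_def]
  refine ContinuousLinearMap.opNorm_le_bound _ (by positivity) fun x => ?_
  set y := (toEuclideanLin ≪≫ₗ LinearMap.toContinuousLinearMap) A x
  have hy_le : ‖y‖ ≤ ∑ i, ‖y i‖ := by
    let b := EuclideanSpace.basisFun m 𝕜
    calc ‖y‖ = ‖∑ i, y i • b i‖ := congrArg norm (b.sum_repr y).symm
      _ ≤ ∑ i, ‖y i • b i‖ := norm_sum_le _ _
      _ = ∑ i, ‖y i‖ := by simp [norm_smul, b.orthonormal.1]
  have hy : ∀ i, ‖y i‖ ≤ (∑ j, ‖A i j‖) * ‖x‖ := fun i => calc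
    ‖y i‖ = ‖∑ j, A i j * x j‖ := by simp [y, toLpLin_apply, mulVec, dotProduct]
    _ ≤ ∑ j, ‖A i j‖ * ‖x‖ := by
      refine (norm_sum_le _ _).trans (sum_le_sum fun j _ => ?_)
      rw [norm_mul]
      exact mul_le_mul_of_nonneg_left (PiLp.norm_apply_le x j) (norm_nonneg _)
    _ = (∑ j, ‖A i j‖) * ‖x‖ := (sum_mul ..).symm
  calc ‖y‖ ≤ ∑ i, (∑ j, ‖A i j‖) * ‖x‖ := hy_le.trans (sum_le_sum fun i _ => hy i)
    _ = (∑ i, ∑ j, ‖A i j‖) * ‖x‖ := (sum_mul ..).symm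

end Matrix

namespace ProbabilityTheory

variable {Ω : Type*} [MeasurableSpace Ω] {μ : Measure Ω}

theorem integral_l2_opNorm_le_sum_integral_norm {m n : Type*} [Fintype m] [Fintype n]
    [DecidableEq n] {M : Ω → Matrix m n ℝ} (hM : ∀ i j, Integrable (fun ω => M ω i j) μ) :
    ∫ ω, ‖M ω‖ ∂μ ≤ ∑ i, ∑ j, ∫ ω, |M ω i j| ∂μ := by
  have hM_abs : ∀ i j, Integrable (fun ω => |M ω i j|) μ := fun i j => (hM i j).abs
  calc ∫ ω, ‖M ω‖ ∂μ ≤ ∫ ω, ∑ i, ∑ j, |M ω i j| ∂μ :=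
        integral_mono_of_nonneg (.of_forall fun _ => norm_nonneg _)
          (integrable_finsetSum _ fun i _ => integrable_finsetSum _ fun j _ => hM_abs i j)
          (.of_forall fun ω => (M ω).l2_opNorm_le_sum_norm)
    _ = ∑ i, ∑ j, ∫ ω, |M ω i j| ∂μ := by
        rw [integral_finsetSum _ fun i _ => integrable_finsetSum _ fun j _ => hM_abs i j]
        exact sum_congr rfl fun i _ => integral_finsetSum _ fun j _ => hM_abs i j

variable [IsProbabilityMeasure μ]

theorem integral_abs_sub_integral_le_sqrt_variance {X : Ω → ℝ} (hX : MemLp X 2 μ) :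
    ∫ ω, |X ω - μ[X]| ∂μ ≤ √(Var[X; μ]) := by
  set Z : Ω → ℝ := fun ω => |X ω - μ[X]|
  have hZ : MemLp Z 2 μ := (hX.sub (memLp_const (∫ ω, X ω ∂μ))).abs
  have hZ_sq : μ[Z ^ 2] = Var[X; μ] := by
    simp [Z, variance_eq_integral hX.aemeasurable, sq_abs]
  have hZ_var := variance_nonneg Z μ
  rw [variance_eq_sub hZ, hZ_sq] at hZ_var
  exact Real.le_sqrt_of_sq_le (by linarith)

theorem integral_abs_sampleMean_sub_le_sqrt_div {ι : Type*} [Fintype ι] [Nonempty ι]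
    {Y : ι → Ω → ℝ} {c v : ℝ} (hY : ∀ i, MemLp (Y i) 2 μ)
    (hindep : Pairwise fun i j => Y i ⟂ᵢ[μ] Y j) (hmean : ∀ i, μ[Y i] = c)
    (hvar : ∀ i, Var[Y i; μ] ≤ v) :
    ∫ ω, |(Fintype.card ι : ℝ)⁻¹ * ∑ i, Y i ω - c| ∂μ ≤ √(v / Fintype.card ι) := by
  set N : ℝ := (Fintype.card ι : ℝ)
  have hN : 0 < N := by positivity
  set T : Ω → ℝ := fun ω => N⁻¹ * ∑ i, Y i ω
  have hT : MemLp T 2 μ := (memLp_finsetSum _ fun i _ => hY i).const_mul N⁻¹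
  have hT_mean : μ[T] = c := by
    simp only [T, integral_const_mul, hmean, sum_const, card_univ, nsmul_eq_mul,
      integral_finsetSum _ fun i _ => (hY i).integrable one_le_two]
    exact inv_mul_cancel_left₀ hN.ne' c
  have hT_var : Var[T; μ] ≤ v / N := calc
    Var[T; μ] = N⁻¹ ^ 2 * ∑ i, Var[Y i; μ] := by
      rw [← IndepFun.variance_sum (fun i _ => hY i) fun i _ j _ hij => hindep hij,
        ← variance_const_mul]
      simp [T]
    _ ≤ N⁻¹ ^ 2 * (N * v) := by
      gcongr
      simpa using sum_le_sum fun i (_ : i ∈ univ) => hvar i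
    _ = v / N := by field_simp
  calc ∫ ω, |T ω - c| ∂μ ≤ √(Var[T; μ]) := hT_mean ▸ integral_abs_sub_integral_le_sqrt_variance hT
    _ ≤ √(v / N) := Real.sqrt_le_sqrt hT_var

theorem integral_abs_sampleMean_comp_sub_le {E ι : Type*} [MeasurableSpace E] [Fintype ι]
    {X : ι → Ω → E} (hX : ∀ i, Measurable (X i)) (hindep : Pairwise fun i j => X i ⟂ᵢ[μ] X j)
    (i₀ : ι) (hid : ∀ i, IdentDistrib (X i) (X i₀) μ μ) {f : E → ℝ} (hf : Measurable f)
    {a b : ℝ} (hfX : ∀ i ω, f (X i ω) ∈ Set.Icc a b) :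
    ∫ ω, |(Fintype.card ι : ℝ)⁻¹ * ∑ i, f (X i ω) - ∫ ω', f (X i₀ ω') ∂μ| ∂μ ≤
      √(((b - a) / 2) ^ 2 / Fintype.card ι) :=
  have : Nonempty ι := ⟨i₀⟩
  integral_abs_sampleMean_sub_le_sqrt_div
    (fun i => memLp_of_bounded (.of_forall (hfX i)) (hf.comp (hX i)).aestronglyMeasurable 2)
    (fun _ _ hij => (hindep hij).comp hf hf) (fun i => ((hid i).comp hf).integral_eq)
    (fun i => variance_le_sq_of_bounded (.of_forall (hfX i)) (hf.comp (hX i)).aemeasurable)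

end ProbabilityTheory

/-- **Expected spectral-norm deviation of the empirical second-moment matrix.**
For i.i.d. random vectors `w⁽¹⁾, …, w⁽ⁿ⁾` with values in `{-1,1}^m`, with
`O* = E[w w^T]` and `Ô = (1/n) Σᵢ w⁽ⁱ⁾ (w⁽ⁱ⁾)^T`, we have
`E[‖Ô − O*‖] ≤ m² √(32π/n)`, where `‖·‖` is the spectral norm. -/
theorem expected_second_moment_deviation_le
    {Ω : Type*} [MeasurableSpace Ω] (μ : Measure Ω) [IsProbabilityMeasure μ]
    (m n : ℕ) (hn : 0 < n) (w : Fin n → Ω → (Fin m → ℝ))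
    (hmeas : ∀ i, Measurable (w i))
    (hval : ∀ i ω j, w i ω j = 1 ∨ w i ω j = -1)
    (hindep : iIndepFun w μ)
    (hid : ∀ i j, IdentDistrib (w i) (w j) μ μ) :
    (∫ ω, ‖(n : ℝ)⁻¹ • (∑ i, Matrix.of fun a b => w i ω a * w i ω b) -
        (Matrix.of fun a b =>
          ∫ ω', w (⟨0, hn⟩ : Fin n) ω' a * w (⟨0, hn⟩ : Fin n) ω' b ∂μ :
            Matrix (Fin m) (Fin m) ℝ)‖ ∂μ) ≤
      m ^ 2 * Real.sqrt (32 * π / n) := by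
  have hprod : ∀ a b : Fin m, Measurable fun v : Fin m → ℝ => v a * v b := by fun_prop
  have hbound : ∀ a b i ω, w i ω a * w i ω b ∈ Set.Icc (-1 : ℝ) 1 := fun a b i ω => by
    rcases hval i ω a with ha | ha <;> rcases hval i ω b with hb | hb <;> simp [ha, hb]
  have hY : ∀ a b i, MemLp (fun ω => w i ω a * w i ω b) 2 μ := fun a b i =>
    memLp_of_bounded (.of_forall (hbound a b i)) ((hprod a b).comp (hmeas i)).aestronglyMeasurable 2
  have hentry : ∀ a b, ∫ ω, |(n : ℝ)⁻¹ * ∑ i, w i ω a * w i ω b -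
      ∫ ω', w ⟨0, hn⟩ ω' a * w ⟨0, hn⟩ ω' b ∂μ| ∂μ ≤ √(1 / n) := fun a b => by
    have := integral_abs_sampleMean_comp_sub_le hmeas (fun _ _ hij => hindep.indepFun hij)
      ⟨0, hn⟩ (fun i => hid i _) (hprod a b) (hbound a b)
    rwa [Fintype.card_fin, show ((1 - -1 : ℝ) / 2) ^ 2 = 1 by norm_num] at this
  refine (integral_l2_opNorm_le_sum_integral_norm fun a b => ?_).trans ?_
  · simp only [Matrix.sub_apply, Matrix.smul_apply, Matrix.sum_apply, Matrix.of_apply, smul_eq_mul]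
    exact (((memLp_finsetSum univ fun i _ => hY a b i).const_mul _).sub
      (memLp_const _)).integrable one_le_two
  calc _ ≤ ∑ _a : Fin m, ∑ _b : Fin m, √(1 / n) :=
        sum_le_sum fun a _ => sum_le_sum fun b _ => by simpa [Matrix.sum_apply] using hentry a b
    _ = m ^ 2 * √(1 / n) := by simp [sq, mul_assoc]
    _ ≤ m ^ 2 * √(32 * π / n) := by
        gcongr
        linarith [Real.pi_gt_three]
end

section
/- Consider the probability distribution on (w, z) ∈ {-1,1}^p × {-1,1} given by P(w, z) = (1/Z) exp( θ_z z + Σ_{j=1}^p θ_j w_j z ). Then for any two distinct indices j ≠ k, the second moment of the candidates factorizes through the latent variable: E[w_j w_k] = E[w_j z] · E[w_k z]. -/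
open Finset Real

/-- Encoding of a spin `{-1,1}` value by a Boolean: `true ↦ 1`, `false ↦ -1`. -/
noncomputable def spin (b : Bool) : ℝ := if b then 1 else -1

/-- Unnormalized density of the conditionally independent Ising model
`exp(θ_z z + Σ_j θ_j w_j z)` on `(w, z) ∈ {-1,1}^p × {-1,1}`. -/
noncomputable def isingWeight (p : ℕ) (θz : ℝ) (θ : Fin p → ℝ)
    (x : (Fin p → Bool) × Bool) : ℝ :=
  Real.exp (θz * spin x.2 + ∑ j, θ j * spin (x.1 j) * spin x.2)

/-- Probability mass function of the conditionally independent Ising model. -/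
noncomputable def isingP (p : ℕ) (θz : ℝ) (θ : Fin p → ℝ)
    (x : (Fin p → Bool) × Bool) : ℝ :=
  isingWeight p θz θ x / ∑ y : (Fin p → Bool) × Bool, isingWeight p θz θ y

/-- Expectation of a function of `(w, z)` under the conditionally independent
Ising model. -/
noncomputable def isingE (p : ℕ) (θz : ℝ) (θ : Fin p → ℝ)
    (f : (Fin p → Bool) × Bool → ℝ) : ℝ :=
  ∑ x : (Fin p → Bool) × Bool, isingP p θz θ x * f x

/-!
For fixed `z`, the substitution `u_i = w_i z` is a bijection of `{-1,1}^p` and turns the weight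
into `exp (θz z) * ∏ i, exp (θ i * u_i)`: the variables `u_1, …, u_p, z` are independent, with
`E[u_i] = tanh θ_i`. Hence `E[∏ i ∈ S, w_i z] = ∏ i ∈ S, tanh θ_i` for every `S`, and since
`w_j w_k = (w_j z) (w_k z)`, we get `E[w_j w_k] = tanh θ_j * tanh θ_k = E[w_j z] * E[w_k z]`.
-/

lemma spin_mul_self (b : Bool) : spin b * spin b = 1 := by
  cases b <;> norm_num [spin]

lemma sum_exp_mul_spin_mul_spin (t : ℝ) (s : Bool) :
    ∑ c : Bool, exp (t * spin c * spin s) = 2 * cosh t := by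
  cases s <;> simp [spin, cosh_eq] <;> ring

lemma sum_exp_mul_spin_mul_spin_mul (t : ℝ) (s : Bool) :
    ∑ c : Bool, exp (t * spin c * spin s) * (spin c * spin s) = 2 * sinh t := by
  cases s <;> simp [spin, sinh_eq] <;> ring

section

variable (p : ℕ) (θz : ℝ) (θ : Fin p → ℝ)

lemma sum_isingWeight_mul_prod_spin_mul_spin (S : Finset (Fin p)) :
    ∑ x : (Fin p → Bool) × Bool, isingWeight p θz θ x * ∏ i ∈ S, spin (x.1 i) * spin x.2 =
      (∑ b : Bool, exp (θz * spin b)) *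
        ∏ i, if i ∈ S then 2 * sinh (θ i) else 2 * cosh (θ i) := by
  rw [Fintype.sum_prod_type_right, Finset.sum_mul]
  refine Finset.sum_congr rfl fun b _ => ?_
  have factor (w : Fin p → Bool) :
      isingWeight p θz θ (w, b) * ∏ i ∈ S, spin (w i) * spin b =
        exp (θz * spin b) * ∏ i, exp (θ i * spin (w i) * spin b) *
          (if i ∈ S then spin (w i) * spin b else 1) := by
    rw [isingWeight, exp_add, exp_sum, ← Fintype.prod_ite_mem S, mul_assoc,
      ← Finset.prod_mul_distrib]
  simp only [factor, ← Finset.mul_sum]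
  congr 1
  rw [← Fintype.prod_sum fun i c => exp (θ i * spin c * spin b) *
    if i ∈ S then spin c * spin b else 1]
  refine Finset.prod_congr rfl fun i _ => ?_
  split_ifs
  · exact sum_exp_mul_spin_mul_spin_mul (θ i) b
  · simpa using sum_exp_mul_spin_mul_spin (θ i) b

lemma isingE_eq_div (f : (Fin p → Bool) × Bool → ℝ) :
    isingE p θz θ f =
      (∑ x, isingWeight p θz θ x * f x) / ∑ x, isingWeight p θz θ x := by
  simp only [isingE, isingP, Finset.sum_div, div_mul_eq_mul_div]

theorem isingE_prod_spin_mul_spin (S : Finset (Fin p)) :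
    isingE p θz θ (fun x => ∏ i ∈ S, spin (x.1 i) * spin x.2) = ∏ i ∈ S, tanh (θ i) := by
  have partition : ∑ x, isingWeight p θz θ x =
      (∑ b : Bool, exp (θz * spin b)) * ∏ i, 2 * cosh (θ i) := by
    simpa using sum_isingWeight_mul_prod_spin_mul_spin p θz θ ∅
  have hz : (∑ b : Bool, exp (θz * spin b)) ≠ 0 := by positivity
  rw [isingE_eq_div, sum_isingWeight_mul_prod_spin_mul_spin, partition, mul_div_mul_left _ _ hz,
    ← Finset.prod_div_distrib, ← Fintype.prod_ite_mem S]
  refine Finset.prod_congr rfl fun i _ => ?_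
  split_ifs
  · rw [tanh_eq_sinh_div_cosh, mul_div_mul_left _ _ two_ne_zero]
  · exact div_self (by positivity)

theorem isingE_spin_mul_spin (j : Fin p) :
    isingE p θz θ (fun x => spin (x.1 j) * spin x.2) = tanh (θ j) := by
  simpa using isingE_prod_spin_mul_spin p θz θ {j}

theorem isingE_spin_mul_spin_of_ne {j k : Fin p} (hjk : j ≠ k) :
    isingE p θz θ (fun x => spin (x.1 j) * spin (x.1 k)) = tanh (θ j) * tanh (θ k) := by
  have pair (x : (Fin p → Bool) × Bool) :
      spin (x.1 j) * spin (x.1 k) = ∏ i ∈ {j, k}, spin (x.1 i) * spin x.2 := by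
    rw [Finset.prod_pair hjk, mul_mul_mul_comm, spin_mul_self, mul_one]
  simp only [pair]
  rw [isingE_prod_spin_mul_spin, Finset.prod_pair hjk]

end

/-- **Second moments factorize through the latent variable.**
For distinct indices `j ≠ k`, `E[w_j w_k] = E[w_j z] · E[w_k z]`. -/
theorem ising_second_moment_factorizes
    (p : ℕ) (θz : ℝ) (θ : Fin p → ℝ) (j k : Fin p) (hjk : j ≠ k) :
    isingE p θz θ (fun x => spin (x.1 j) * spin (x.1 k)) =
      isingE p θz θ (fun x => spin (x.1 j) * spin x.2) *
        isingE p θz θ (fun x => spin (x.1 k) * spin x.2) := by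
  rw [isingE_spin_mul_spin_of_ne p θz θ hjk, isingE_spin_mul_spin, isingE_spin_mul_spin]
end

section
/- Let p ≥ 3 and let Ω be a set of unordered pairs of distinct indices from {1,...,p}. Suppose that for every index i there exist indices j and k, with i, j, k pairwise distinct, such that {i,j} ∈ Ω, {i,k} ∈ Ω, and {j,k} ∈ Ω. Then the linear map ℝ^p → ℝ^Ω sending x to the vector ( x_i + x_j )_{{i,j} ∈ Ω} is injective; equivalently, the 0/1 matrix M_Ω whose row for pair {i,j} has a 1 in positions i and j and 0 elsewhere has full column rank. -/
/-- `x i` is recovered from the pair sums over a triangle `{i, j, k}`: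
`2 x_i = (x_i + x_j) + (x_i + x_k) - (x_j + x_k)`. -/
theorem eq_of_add_eq_of_triangle {ι G : Type*} [AddCommGroup G] [IsAddTorsionFree G]
    {x y : ι → G} {i j k : ι} (hij : x i + x j = y i + y j) (hik : x i + x k = y i + y k)
    (hjk : x j + x k = y j + y k) : x i = y i := by
  have htwice : 2 • x i = 2 • y i :=
    calc 2 • x i = (x i + x j) + (x i + x k) - (x j + x k) := by abel
      _ = (y i + y j) + (y i + y k) - (y j + y k) := by rw [hij, hik, hjk]
      _ = 2 • y i := by abel
  exact IsAddTorsionFree.nsmul_right_injective two_ne_zero htwice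

theorem pair_sum_map_injective_general (p : ℕ) (Ω : Set (Sym2 (Fin p)))
    (htri : ∀ i : Fin p, ∃ j k : Fin p, i ≠ j ∧ i ≠ k ∧ j ≠ k ∧
      s(i, j) ∈ Ω ∧ s(i, k) ∈ Ω ∧ s(j, k) ∈ Ω) :
    Function.Injective (fun x : Fin p → ℝ => fun e : Ω =>
      Sym2.lift ⟨fun i j => x i + x j, fun i j => add_comm _ _⟩ (e : Sym2 (Fin p))) := by
  intro x y h
  have hpair : ∀ a b, s(a, b) ∈ Ω → x a + x b = y a + y b := fun a b hab =>
    congrFun h ⟨s(a, b), hab⟩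
  funext i
  obtain ⟨j, k, -, -, -, hij, hik, hjk⟩ := htri i
  exact eq_of_add_eq_of_triangle (hpair i j hij) (hpair i k hik) (hpair j k hjk)

/-- **Injectivity of the pair-sum constraint map.**
Let `Ω` be a set of unordered pairs of distinct indices of `{1,…,p}` (`p ≥ 3`) such
that every index `i` lies in a triangle: there are `j, k` with `i, j, k` pairwise
distinct and `{i,j}, {i,k}, {j,k} ∈ Ω`.  Then the linear map `ℝ^p → ℝ^Ω` sending
`x` to `({i,j} ↦ x i + x j)` is injective, i.e. the 0/1 constraint matrix `M_Ω`
has full column rank. -/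
theorem pair_sum_map_injective (p : ℕ) (hp : 3 ≤ p) (Ω : Set (Sym2 (Fin p)))
    (hdiag : ∀ e ∈ Ω, ¬ e.IsDiag)
    (htri : ∀ i : Fin p, ∃ j k : Fin p, i ≠ j ∧ i ≠ k ∧ j ≠ k ∧
      s(i, j) ∈ Ω ∧ s(i, k) ∈ Ω ∧ s(j, k) ∈ Ω) :
    Function.Injective (fun x : Fin p → ℝ => fun e : Ω =>
      Sym2.lift ⟨fun i j => x i + x j, fun i j => add_comm _ _⟩ (e : Sym2 (Fin p))) :=
  pair_sum_map_injective_general p Ω htri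
end

section
/- For every vector x ∈ ℝ^m, letting 1 denote the all-ones vector in ℝ^m, the Euclidean norm of x is bounded by half the Frobenius norm of the symmetric matrix x 1^T + 1 x^T: ‖x‖₂ ≤ (1/2) ‖x 1^T + 1 x^T‖_F. -/
/-!
The Frobenius norm of a square matrix dominates the Euclidean norm of its diagonal, and the
diagonal of `x 1ᵀ + 1 xᵀ` is `2 x`.
-/

open scoped Matrix

attribute [local instance] Matrix.frobeniusNormedAddCommGroup

namespace Matrix

attribute [local instance] frobeniusSeminormedAddCommGroup in
theorem frobenius_norm_diag_le {n α : Type*} [Fintype n] [SeminormedAddCommGroup α]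
    (A : Matrix n n α) : ‖WithLp.toLp 2 A.diag‖ ≤ ‖A‖ := by
  rw [frobenius_norm_def, PiLp.norm_eq_of_L2, Real.sqrt_eq_rpow]
  gcongr with i
  simpa only [diag_apply, Real.rpow_two] using
    Finset.single_le_sum (f := fun j => ‖A i j‖ ^ (2 : ℝ)) (fun _ _ => by positivity)
      (Finset.mem_univ i)

theorem diag_vecMulVec_add_vecMulVec {n α : Type*} [NonAssocSemiring α] (v : n → α) :
    (vecMulVec v (fun _ => 1) + vecMulVec (fun _ => 1) v).diag = v + v := by
  ext i
  simp [vecMulVec_apply]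

end Matrix

/-- **Euclidean norm bounded by Frobenius norm of `x 1ᵀ + 1 xᵀ`.**
For every `x ∈ ℝ^m`, `‖x‖₂ ≤ (1/2) ‖x 1ᵀ + 1 xᵀ‖_F`, where `1` is the all-ones
vector, so `x 1ᵀ + 1 xᵀ` is the matrix with `(i,j)` entry `x i + x j`, and the
matrix norm is the Frobenius norm. -/
theorem euclidean_norm_le_half_frobenius (m : ℕ) (x : EuclideanSpace ℝ (Fin m)) :
    ‖x‖ ≤ (1 / 2) *
      ‖Matrix.vecMulVec (fun i => x i) (fun _ => (1 : ℝ)) +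
        Matrix.vecMulVec (fun _ => (1 : ℝ)) (fun i => x i)‖ := by
  calc ‖x‖ = (1 / 2) * ‖x + x‖ := by
        rw [← two_smul ℝ x, norm_smul, Real.norm_two, one_div, inv_mul_cancel_left₀ two_ne_zero]
    _ = (1 / 2) * ‖WithLp.toLp 2 (Matrix.vecMulVec (fun i => x i) (fun _ => (1 : ℝ)) +
          Matrix.vecMulVec (fun _ => (1 : ℝ)) (fun i => x i)).diag‖ := by
        rw [Matrix.diag_vecMulVec_add_vecMulVec]
        rfl
    _ ≤ _ := by grw [Matrix.frobenius_norm_diag_le]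
end
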